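/- Let s ∈ {0,1}^{n'} with 1 ≤ n' ≤ n, let j ∈ [n'], and let s' = 1^j 2^{n-j}, where 2 is a character distinct from 0 and 1. If k is the number of 1's among the first j characters of s, then the Levenshtein edit distance d_L(s, s') = n - k. -/

import Mathlib

/-- Costs of the edit operations (as in the former `Mathlib.Data.List.EditDistance.Defs`). -/
structure Levenshtein.Cost (α β δ : Type*) where
  delete : α → δ
  insert : β → δ
  substitute : α → β → δ

/-- Unit costs: deletion and insertion cost 1, substitution costs 0 or 1. -/
def Levenshtein.defaultCost {α : Type*} [DecidableEq α] : Levenshtein.Cost α α ℕ where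
  delete _ := 1
  insert _ := 1
  substitute a b := if a = b then 0 else 1

/-- The Levenshtein distance, given by the recursion the former Mathlib definition satisfied. -/
def levenshtein {α β δ : Type*} [AddZeroClass δ] [Min δ] (C : Levenshtein.Cost α β δ) :
    List α → List β → δ
  | [], [] => 0
  | x :: xs, [] => C.delete x + levenshtein C xs []
  | [], y :: ys => levenshtein C [] ys + C.insert y
  | x :: xs, y :: ys => min (C.delete x + levenshtein C xs (y :: ys))
      (min (C.insert y + levenshtein C (x :: xs) ys) (C.substitute x y + levenshtein C xs ys))

/-- The Levenshtein edit distance with unit costs, over alphabet `ℕ`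
(which contains the extended alphabet `{0,1,2}`). -/
def editDist (x y : List ℕ) : ℕ := levenshtein Levenshtein.defaultCost x y

/-!
Matching `s` position by position against `1^j 2^m` (the first `j` characters against `1`s, free
exactly at the `k` ones, the rest against `2`s) and inserting the missing `2`s costs `j + m - k`.
Conversely, since `s` contains no `2`, only target `1`s can be matched for free, and a free match
beyond the first `j` characters of `s` has to be paid for by a deletion, so no alignment saves
more than `k`.
-/

open Levenshtein

theorem List.count_take_succ_le {α : Type*} [BEq α] (b : α) (s : List α) (j : ℕ) :
    (s.take (j + 1)).count b ≤ (s.take j).count b + 1 := by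
  rw [List.take_add_one, List.count_append]
  have := List.count_le_length (a := b) (l := s[j]?.toList)
  have := Option.length_toList_le (o := s[j]?)
  omega

section

variable {α : Type*} [DecidableEq α]

@[simp]
theorem levenshtein_defaultCost_nil_left (t : List α) :
    levenshtein defaultCost [] t = t.length := by
  induction t with
  | nil => rw [levenshtein]; rfl
  | cons b t ih => rw [levenshtein, ih]; rfl

@[simp]
theorem levenshtein_defaultCost_nil_right (s : List α) :
    levenshtein defaultCost s [] = s.length := by
  induction s with
  | nil => rw [levenshtein]; rfl
  | cons a s ih => rw [levenshtein, ih]; simp only [defaultCost, List.length_cons]; omega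

theorem levenshtein_defaultCost_cons_cons (a b : α) (s t : List α) :
    levenshtein defaultCost (a :: s) (b :: t) =
      min (1 + levenshtein defaultCost s (b :: t))
        (min (1 + levenshtein defaultCost (a :: s) t)
          ((if a = b then 0 else 1) + levenshtein defaultCost s t)) := by
  rw [levenshtein]; rfl

theorem levenshtein_defaultCost_le_max_length (s t : List α) :
    levenshtein defaultCost s t ≤ max s.length t.length := by
  induction s generalizing t with
  | nil => simp
  | cons a s ih =>
    cases t with
    | nil => simp
    | cons b t =>
      have hsub : (if a = b then 0 else 1) + levenshtein defaultCost s t ≤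
          1 + max s.length t.length := add_le_add (by split <;> omega) (ih t)
      rw [levenshtein_defaultCost_cons_cons]
      simp only [List.length_cons]
      omega

theorem le_levenshtein_defaultCost_replicate {c : α} {s : List α} (hc : c ∉ s) (m : ℕ) :
    m ≤ levenshtein defaultCost s (List.replicate m c) := by
  induction s generalizing m with
  | nil => simp
  | cons a s ihs =>
    have hac : a ≠ c := fun h => hc (h ▸ List.mem_cons_self)
    have ihs := ihs (fun h => hc (List.mem_cons_of_mem a h))
    induction m with
    | zero => exact Nat.zero_le _
    | succ m ihm =>
      rw [List.replicate_succ, levenshtein_defaultCost_cons_cons, if_neg hac]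
      have := ihs (m + 1)
      have := ihs m
      rw [List.replicate_succ] at *
      omega

theorem le_count_take_add_levenshtein_defaultCost {b c : α} {s : List α} (hc : c ∉ s)
    (j m : ℕ) :
    j + m ≤ (s.take j).count b +
      levenshtein defaultCost s (List.replicate j b ++ List.replicate m c) := by
  induction s generalizing j with
  | nil => simp
  | cons a s ihs =>
    have ihs := ihs (fun h => hc (List.mem_cons_of_mem a h))
    induction j with
    | zero => simpa using le_levenshtein_defaultCost_replicate hc m
    | succ j ihj =>
      have hdel := ihs (j + 1)
      have hsub := ihs j
      have hmono : ((a :: s).take j).count b ≤ ((a :: s).take (j + 1)).count b :=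
        (List.take_sublist_take_left (Nat.le_succ j)).count_le b
      have := s.count_take_succ_le b j
      rw [List.replicate_succ, List.cons_append, levenshtein_defaultCost_cons_cons]
      rw [List.replicate_succ, List.cons_append] at hdel
      rw [List.take_succ_cons, List.count_cons] at hmono ⊢
      -- deletion, insertion and substitution are bounded by `hdel`, `ihj` and `hsub`
      by_cases hab : a = b
      · subst hab
        simp only [if_true, beq_self_eq_true] at *
        omega
      · simp only [hab, if_false, beq_iff_eq] at *
        omega

theorem levenshtein_defaultCost_add_count_take_le {b c : α} {s : List α} {j m : ℕ}
    (hj : j ≤ s.length) (hs : s.length ≤ j + m) :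
    levenshtein defaultCost s (List.replicate j b ++ List.replicate m c) +
      (s.take j).count b ≤ j + m := by
  induction j generalizing s with
  | zero =>
    have := levenshtein_defaultCost_le_max_length s (List.replicate m c)
    simp only [List.length_replicate] at this
    simp only [List.replicate_zero, List.nil_append, List.take_zero, List.count_nil]
    omega
  | succ j ih =>
    obtain _ | ⟨a, s⟩ := s
    · simp at hj
    simp only [List.length_cons] at hj hs
    have hsub := ih (s := s) (by omega) (by omega)
    rw [List.replicate_succ, List.cons_append, levenshtein_defaultCost_cons_cons,
      List.take_succ_cons, List.count_cons]
    by_cases hab : a = b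
    · subst hab
      simp only [if_true, beq_self_eq_true]
      omega
    · simp only [hab, if_false, beq_iff_eq]
      omega

theorem levenshtein_defaultCost_replicate_append_replicate {b c : α} {s : List α} {j m : ℕ}
    (hc : c ∉ s) (hj : j ≤ s.length) (hs : s.length ≤ j + m) :
    levenshtein defaultCost s (List.replicate j b ++ List.replicate m c) =
      j + m - (s.take j).count b := by
  have := le_count_take_add_levenshtein_defaultCost (b := b) hc j m
  have := levenshtein_defaultCost_add_count_take_le (b := b) (c := c) hj hs
  omega

end

theorem edit_dist_to_ones_twos_query_general
    (n n' : ℕ) (hn'n : n' ≤ n)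
    (s : List ℕ) (hlen : s.length = n')
    (hbin : ∀ c ∈ s, c = 0 ∨ c = 1)
    (j : ℕ) (hjn' : j ≤ n')
    (k : ℕ) (hk : k = (s.take j).count 1) :
    editDist s (List.replicate j 1 ++ List.replicate (n - j) 2) = n - k := by
  have h2 : 2 ∉ s := fun h => by rcases hbin 2 h with h | h <;> omega
  rw [hk, editDist, levenshtein_defaultCost_replicate_append_replicate h2 (by omega) (by omega)]
  omega

/-- For a binary sequence `s` of length `n'` with `1 ≤ n' ≤ n`, `j ∈ [n']`,
and `s' = 1^j 2^(n-j)`, if `k` is the number of `1`'s among the first `j` characters of `s`,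
then `d_L(s, s') = n - k`. -/
theorem edit_dist_to_ones_twos_query
    (n n' : ℕ) (hn'1 : 1 ≤ n') (hn'n : n' ≤ n)
    (s : List ℕ) (hlen : s.length = n')
    (hbin : ∀ c ∈ s, c = 0 ∨ c = 1)
    (j : ℕ) (hj1 : 1 ≤ j) (hjn' : j ≤ n')
    (k : ℕ) (hk : k = (s.take j).count 1) :
    editDist s (List.replicate j 1 ++ List.replicate (n - j) 2) = n - k :=
  edit_dist_to_ones_twos_query_general n n' hn'n s hlen hbin j hjn' k hk
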